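/- arXiv:1206.5572 — 2 statements merged into one kernel-verified Lean document; each statement's English description precedes it below -/
import Mathlib

section
/- Let S ⊆ ℝ^d be a closed nonempty set and x ∈ ∂S. The following three properties are equivalent: (i) S is wedged at x, i.e. N_S^C(x) ∩ (−N_S^C(x)) = {0}; (ii) the Clarke tangent cone T_S^C(x) has nonempty interior; (iii) there exist v ∈ ℝ^d and ε > 0 such that y + W(v,ε) ⊆ S for every y ∈ (x + εB_d) ∩ S. -/
open Set Metric Filter Topology MeasureTheory
open scoped Pointwise

noncomputable section

/-- Euclidean space `ℝ^d`. -/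
abbrev Euc (d : ℕ) := EuclideanSpace ℝ (Fin d)


/-- Real inner product on `ℝ^d`. -/
def rinner {d : ℕ} (x y : Euc d) : ℝ := inner ℝ x y

/-- Limiting proximal normal directions to `S` at `x`. -/
def limProxDirs {d : ℕ} (S : Set (Euc d)) (x : Euc d) : Set (Euc d) :=
  {v | ‖v‖ = 1 ∧ ∃ y w : ℕ → Euc d,
    (∀ n, y n ∈ S) ∧ Tendsto y atTop (𝓝 x) ∧
    (∀ n, w n ≠ 0) ∧ Tendsto w atTop (𝓝 (0 : Euc d)) ∧
    (∀ n, infDist (y n + w n) S = ‖w n‖) ∧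
    Tendsto (fun n => (‖w n‖)⁻¹ • w n) atTop (𝓝 v)}

/-- Clarke (proximal) normal cone to `S` at `x`. -/
def clarkeNormalCone {d : ℕ} (S : Set (Euc d)) (x : Euc d) : Set (Euc d) :=
  {p | ∃ lam : ℝ, 0 ≤ lam ∧
    ∃ ξ ∈ closure (convexHull ℝ ({0} ∪ limProxDirs S x)), p = lam • ξ}

/-- `S` is wedged at `x` if its Clarke normal cone at `x` is pointed. -/
def WedgedAt {d : ℕ} (S : Set (Euc d)) (x : Euc d) : Prop :=
  clarkeNormalCone S x ∩ (-(clarkeNormalCone S x)) = {0}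

/-- Clarke tangent cone: the polar cone of the Clarke normal cone. -/
def clarkeTangentCone {d : ℕ} (S : Set (Euc d)) (x : Euc d) : Set (Euc d) :=
  {v | ∀ p ∈ clarkeNormalCone S x, rinner p v ≤ 0}

/-- Bouligand tangent cone. -/
def bouligandCone {d : ℕ} (S : Set (Euc d)) (x : Euc d) : Set (Euc d) :=
  {v | Filter.liminf (fun t : ℝ => infDist (x + t • v) S / t) (𝓝[>] (0:ℝ)) = 0}

/-- The wedge `W(v, ε) = {s • w : w ∈ v + εB, s ∈ [0, ε]}`. -/
def wedge {d : ℕ} (v : Euc d) (ε : ℝ) : Set (Euc d) :=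
  {p | ∃ w ∈ ball v ε, ∃ s ∈ Icc (0:ℝ) ε, p = s • w}

/-- Signed distance function of a closed set. -/
def signedDistFn {d : ℕ} (Z : Set (Euc d)) (x : Euc d) : ℝ :=
  infDist x Z - infDist x (closure Zᶜ)

/-- `r`-inner approximation `S_r = {x : dist(x, ℝ^d ∖ S) ≥ r}`. -/
def innerApprox {d : ℕ} (S : Set (Euc d)) (r : ℝ) : Set (Euc d) :=
  {x | r ≤ infDist x Sᶜ}

/-- `Q(S,r) = S ∖ interior S_r`. -/
def crown {d : ℕ} (S : Set (Euc d)) (r : ℝ) : Set (Euc d) :=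
  S \ interior (innerApprox S r)

/-- `r(x) = dist(x, closure(ℝ^d ∖ S))`. -/
def bdist {d : ℕ} (S : Set (Euc d)) (x : Euc d) : ℝ := infDist x (closure Sᶜ)

/-- (F1): continuity on `ℝ^d × U` and uniform Lipschitz continuity in the state. -/
def CondF1 {d m : ℕ} (f : Euc d → Euc m → Euc d) (Uset : Set (Euc m)) : Prop :=
  ContinuousOn (fun p : Euc d × Euc m => f p.1 p.2) (univ ×ˢ Uset) ∧
  ∃ Lf : ℝ, 0 ≤ Lf ∧ ∀ x y : Euc d, ∀ u ∈ Uset, ‖f x u - f y u‖ ≤ Lf * ‖x - y‖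

/-- (F2): sublinear growth. -/
def CondF2 {d m : ℕ} (f : Euc d → Euc m → Euc d) (Uset : Set (Euc m)) : Prop :=
  ∃ Cf : ℝ, 0 ≤ Cf ∧ ∀ (x : Euc d), ∀ u ∈ Uset, ‖f x u‖ ≤ Cf * (1 + ‖x‖)

/-- (F3): convexity of velocity sets. -/
def CondF3 {d m : ℕ} (f : Euc d → Euc m → Euc d) (Uset : Set (Euc m)) : Prop :=
  ∀ x : Euc d, Convex ℝ ((fun u => f x u) '' Uset)

/-- (S1): `S` compact and wedged at every boundary point. -/
def CondS1 {d : ℕ} (S : Set (Euc d)) : Prop :=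
  IsCompact S ∧ ∀ x ∈ frontier S, WedgedAt S x

/-- (S2): strict inwardness. -/
def CondS2 {d m : ℕ} (f : Euc d → Euc m → Euc d) (Uset : Set (Euc m)) (S : Set (Euc d)) : Prop :=
  ∀ x ∈ frontier S, ∀ p ∈ clarkeNormalCone S x, p ≠ 0 → ∃ u ∈ Uset, rinner (f x u) p < 0

/-- A measurable open-loop control with values in `Uset` on `[0,T]`. -/
def IsAdmControl {m : ℕ} (Uset : Set (Euc m)) (T : ℝ) (u : ℝ → Euc m) : Prop :=
  Measurable u ∧ ∀ t ∈ Icc (0:ℝ) T, u t ∈ Uset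

/-- Carathéodory solution of `ẋ = f(x,u(t))` on `[0,T]` with `x(0) = x0`. -/
def IsOLSol {d m : ℕ} (f : Euc d → Euc m → Euc d) (u : ℝ → Euc m) (T : ℝ)
    (x0 : Euc d) (x : ℝ → Euc d) : Prop :=
  ContinuousOn x (Icc 0 T) ∧ x 0 = x0 ∧
  IntegrableOn (fun s => f (x s) (u s)) (Icc 0 T) ∧
  ∀ t ∈ Icc (0:ℝ) T, x t = x0 + ∫ s in (0:ℝ)..t, f (x s) (u s)

/-- Open loop `S`-constrained controllability to `Sig`. -/
def OLConstrainedControllable {d m : ℕ} (f : Euc d → Euc m → Euc d) (Uset : Set (Euc m))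
    (S Sig : Set (Euc d)) : Prop :=
  ∀ x0 ∈ S, ∃ T : ℝ, 0 ≤ T ∧ ∃ u : ℝ → Euc m, IsAdmControl Uset T u ∧
    ∃ x : ℝ → Euc d, IsOLSol f u T x0 x ∧ (∀ t ∈ Icc (0:ℝ) T, x t ∈ S) ∧ x T ∈ Sig

/-- A finite patchy feedback `(Ω_1,…,Ω_N; u_1,…,u_N)` for `f` on the open set `D`. -/
structure IsPatchyFeedback {d m : ℕ} (f : Euc d → Euc m → Euc d) (Uset : Set (Euc m))
    (D : Set (Euc d)) {N : ℕ} (Ω : Fin N → Set (Euc d)) (uv : Fin N → Euc m) : Prop where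
  patch_open : ∀ i, IsOpen (Ω i)
  ctrl_mem : ∀ i, uv i ∈ Uset
  cover : D = ⋃ i, Ω i
  inward : ∀ i : Fin N, ∀ x ∈ frontier (Ω i) \ ⋃ j ∈ Ioi i, Ω j,
    f x (uv i) ∈ interior (bouligandCone (Ω i) x)

/-- `U` is the feedback law associated with the patches `(Ω_i, u_i)`:
`U(x) = u_{i*(x)}` with `i*(x) = max {i : x ∈ Ω_i}`. -/
def IsFeedbackLaw {d m N : ℕ} (Ω : Fin N → Set (Euc d)) (uv : Fin N → Euc m)
    (U : Euc d → Euc m) : Prop :=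
  ∀ i : Fin N, ∀ x ∈ Ω i \ ⋃ j ∈ Ioi i, Ω j, U x = uv i

/-- Carathéodory solution of the closed-loop system `ẋ = f(x, U(x))` on `[0,T]`,
with values in `D`, starting at `x0`. -/
def IsCLSol {d m : ℕ} (f : Euc d → Euc m → Euc d) (U : Euc d → Euc m) (D : Set (Euc d))
    (T : ℝ) (x0 : Euc d) (x : ℝ → Euc d) : Prop :=
  ContinuousOn x (Icc 0 T) ∧ x 0 = x0 ∧ (∀ s ∈ Icc (0:ℝ) T, x s ∈ D) ∧
  IntegrableOn (fun s => f (x s) (U (x s))) (Icc 0 T) ∧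
  ∀ t ∈ Icc (0:ℝ) T, x t = x0 + ∫ s in (0:ℝ)..t, f (x s) (U (x s))

/-- A closed-loop solution that cannot be extended to a strictly larger time interval. -/
def MaximalCLSol {d m : ℕ} (f : Euc d → Euc m → Euc d) (U : Euc d → Euc m) (D : Set (Euc d))
    (T : ℝ) (x0 : Euc d) (x : ℝ → Euc d) : Prop :=
  IsCLSol f U D T x0 x ∧
  ¬ ∃ T' : ℝ, T < T' ∧ ∃ x' : ℝ → Euc d, IsCLSol f U D T' x0 x' ∧ ∀ t ∈ Icc (0:ℝ) T, x' t = x t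

/-- Carathéodory solution of the autonomous equation `ẋ = g(x)` on `[a,b]` with values in `Ω`. -/
def IsPVFSol {d : ℕ} (g : Euc d → Euc d) (Ω : Set (Euc d)) (a b : ℝ) (γ : ℝ → Euc d) : Prop :=
  ContinuousOn γ (Icc a b) ∧ (∀ t ∈ Icc a b, γ t ∈ Ω) ∧
  IntegrableOn (fun s => g (γ s)) (Icc a b) ∧
  ∀ t ∈ Icc a b, γ t = γ a + ∫ s in a..t, g (γ s)

/-- A patchy vector field `g` on the open set `Ω` with patches `(Ω_α, g_α)`. -/
structure IsPatchyVF {d : ℕ} (A : Type) [LinearOrder A] (Ωa : A → Set (Euc d))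
    (ga : A → Euc d → Euc d) (Ω : Set (Euc d)) (g : Euc d → Euc d) : Prop where
  patch_open : ∀ α, IsOpen (Ωa α)
  cover : Ω = ⋃ α, Ωa α
  locFin : LocallyFinite Ωa
  lip : ∀ α, ∃ K : NNReal, LipschitzWith K (ga α)
  inward : ∀ α, ∀ x ∈ frontier (Ωa α), ga α x ∈ interior (bouligandCone (Ωa α) x)
  sel : ∀ x ∈ Ω, ∃ α, x ∈ Ωa α ∧ (∀ β, x ∈ Ωa β → β ≤ α) ∧ g x = ga α x

/-!
(ii) ⇒ (i): if `±p` both lie in the Clarke normal cone, then `p` is orthogonal to the whole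
Clarke tangent cone, which has nonempty interior only if `p = 0`.

(iii) ⇒ (ii): every point `y ∈ S` near `x` sees the wedge `y + W(v, ε)` inside `S`, so every
proximal normal at such a `y` makes a nonpositive inner product with every `u ∈ v + εB`; this
passes to limiting directions and to their closed convex conic hull, so `v + εB ⊆ T_S^C(x)`.

(i) ⇒ (iii): the limiting directions form a compact subset of the unit sphere, lying in the
pointed cone `N_S^C(x)`, so `0` is not in their (compact) convex hull and Hahn–Banach gives
`v` with `⟪ξ, v⟫ < -δ` for all limiting directions `ξ`. By compactness of the unit sphere,
proximal normals `w` at points of `S` near `x` satisfy `⟪w, v⟫ ≤ -δ ‖w‖`. Now follow a segment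
`t ↦ y + t u` with `u` close to `v`: whenever it has left `S`, the vector from the nearest point
of `S` makes an obtuse angle with `u`, so the distance to `S` cannot increase; as it starts at
`0`, the segment never leaves `S`.
-/

open scoped RealInnerProductSpace

theorem IsCompact.isCompact_convexHull {E : Type*} [NormedAddCommGroup E] [NormedSpace ℝ E]
    [FiniteDimensional ℝ E] {s : Set E} (hs : IsCompact s) : IsCompact (convexHull ℝ s) := by
  let combo (k : ℕ) (p : (Fin k → ℝ) × (Fin k → E)) : E := ∑ i, p.1 i • p.2 i
  -- Carathéodory: `finrank + 1` points suffice.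
  have hull_eq : convexHull ℝ s = ⋃ k ∈ Iic (Module.finrank ℝ E + 1),
      combo k '' (stdSimplex ℝ (Fin k) ×ˢ univ.pi fun _ => s) := by
    refine Subset.antisymm (fun y hy => ?_) ?_
    · obtain ⟨ι, _, z, w, hzs, hz, hw0, hw1, rfl⟩ := eq_pos_convex_span_of_mem_convexHull hy
      have hcard : Fintype.card ι ≤ Module.finrank ℝ E + 1 :=
        hz.card_le_finrank_succ.trans (Nat.succ_le_succ (Submodule.finrank_le _))
      let e := Fintype.equivFin ι
      refine mem_biUnion (x := Fintype.card ι) hcard ⟨(w ∘ e.symm, z ∘ e.symm),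
        ⟨⟨fun i => (hw0 _).le, ?_⟩, fun i _ => hzs (mem_range_self _)⟩, ?_⟩
      · simpa only [Function.comp_apply] using (e.symm.sum_comp w).trans hw1
      · exact e.symm.sum_comp fun i => w i • z i
    · simp only [iUnion_subset_iff, image_subset_iff]
      rintro k - ⟨w, z⟩ ⟨⟨hw0, hw1⟩, hz⟩
      exact (convex_convexHull ℝ s).sum_mem (fun i _ => hw0 i) hw1
        fun i _ => subset_convexHull ℝ s (hz i (mem_univ i))
  rw [hull_eq]
  exact (finite_Iic _).isCompact_biUnion fun k _ =>
    ((isCompact_stdSimplex ℝ (Fin k)).prod (isCompact_univ_pi fun _ => hs)).image (by fun_prop)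

theorem ConvexCone.Salient.convex_diff_zero {𝕜 E : Type*} [Field 𝕜] [LinearOrder 𝕜]
    [IsStrictOrderedRing 𝕜] [AddCommGroup E] [Module 𝕜 E] {C : ConvexCone 𝕜 E}
    (hC : C.Salient) : Convex 𝕜 ((C : Set E) \ {0}) := by
  rintro p ⟨hp, hp0⟩ q ⟨hq, hq0⟩ a b ha hb hab
  rcases ha.eq_or_lt with rfl | ha
  · rw [zero_add] at hab
    simpa [hab] using And.intro hq hq0
  rcases hb.eq_or_lt with rfl | hb
  · rw [add_zero] at hab
    simpa [hab] using And.intro hp hp0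
  have hap : a • p ∈ C := C.smul_mem ha hp
  have hbq : b • q ∈ C := C.smul_mem hb hq
  refine ⟨C.add_mem hap hbq, fun h => ?_⟩
  have hneg : -(a • p) = b • q := neg_eq_of_add_eq_zero_right (mem_singleton_iff.1 h)
  exact hC _ hap (smul_ne_zero ha.ne' hp0) (hneg ▸ hbq)

theorem nonpos_of_eventually_le_of_pos {f : ℝ → ℝ} {a b : ℝ} (hf : ContinuousOn f (Icc a b))
    (ha : f a ≤ 0) (hf_le : ∀ t ∈ Ico a b, 0 < f t → ∀ᶠ τ in 𝓝[>] t, f τ ≤ f t) :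
    ∀ t ∈ Icc a b, f t ≤ 0 := by
  intro t ht
  refine le_of_forall_pos_le_add fun η hη => ?_
  rw [zero_add]
  have hclosed : IsClosed ({τ | f τ ≤ η} ∩ Icc a b) := by
    rw [inter_comm]
    exact hf.preimage_isClosed_of_isClosed isClosed_Icc isClosed_Iic
  refine hclosed.Icc_subset_of_forall_mem_nhdsWithin (ha.trans hη.le)
    (fun τ ⟨hτη, hτ⟩ => ?_) ht
  rcases lt_or_ge 0 (f τ) with hpos | hnonpos
  · exact (hf_le τ hτ hpos).mono fun _ h => h.trans hτη
  · have hIcc : Icc a b ∈ 𝓝[>] τ :=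
      mem_of_superset (Ioo_mem_nhdsGT hτ.2)
        (Ioo_subset_Icc_self.trans (Icc_subset_Icc hτ.1 le_rfl))
    exact ((hf τ (Ico_subset_Icc_self hτ)).mono_of_mem_nhdsWithin hIcc).eventually
      (gt_mem_nhds (hnonpos.trans_lt hη)) |>.mono fun _ h => h.le

section InnerProductSpace

variable {E : Type*} [NormedAddCommGroup E] [InnerProductSpace ℝ E]

theorem exists_forall_inner_lt_neg_of_zero_notMem [CompleteSpace E] {C : Set E}
    (hconv : Convex ℝ C) (hclosed : IsClosed C) (h0 : (0 : E) ∉ C) :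
    ∃ v : E, ∃ δ > 0, ∀ ξ ∈ C, ⟪ξ, v⟫ < -δ := by
  obtain ⟨f, u, hfC, hu⟩ := geometric_hahn_banach_closed_point hconv hclosed h0
  refine ⟨(InnerProductSpace.toDual ℝ E).symm f, -u, by simpa using hu, fun ξ hξ => ?_⟩
  rw [real_inner_comm, InnerProductSpace.toDual_symm_apply, neg_neg]
  exact hfC ξ hξ

theorem eventually_norm_add_smul_lt_of_inner_neg {a b : E} (h : ⟪a, b⟫ < 0) :
    ∀ᶠ σ in 𝓝[>] (0 : ℝ), ‖a + σ • b‖ < ‖a‖ := by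
  have hslope : ∀ᶠ σ in 𝓝 (0 : ℝ), 2 * ⟪a, b⟫ + σ * ‖b‖ ^ 2 < 0 :=
    (Continuous.tendsto (by fun_prop) 0).eventually
      (gt_mem_nhds (by simp only [zero_mul, add_zero]; linarith))
  filter_upwards [nhdsWithin_le_nhds hslope, self_mem_nhdsWithin] with σ hσ (hσ0 : 0 < σ)
  have hsq : ‖a + σ • b‖ ^ 2 = ‖a‖ ^ 2 + σ * (2 * ⟪a, b⟫ + σ * ‖b‖ ^ 2) := by
    rw [norm_add_sq_real, real_inner_smul_right, norm_smul, Real.norm_eq_abs, mul_pow, sq_abs]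
    ring
  refine lt_of_pow_lt_pow_left₀ 2 (norm_nonneg a) ?_
  rw [hsq]
  linarith [mul_neg_of_pos_of_neg hσ0 hσ]

theorem inner_nonpos_of_eventually_norm_le_norm_sub_smul {w u : E}
    (h : ∀ᶠ s in 𝓝[>] (0 : ℝ), ‖w‖ ≤ ‖w - s • u‖) : ⟪w, u⟫ ≤ 0 := by
  by_contra! hpos
  have hneg : ⟪w, -u⟫ < 0 := by rwa [inner_neg_right, neg_lt_zero]
  obtain ⟨s, hs, hlt⟩ := (h.and (eventually_norm_add_smul_lt_of_inner_neg hneg)).exists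
  rw [smul_neg, ← sub_eq_add_neg] at hlt
  exact hlt.not_ge hs

theorem eventually_infDist_add_smul_le {S : Set E} {y u q : E} {t : ℝ} (hq : q ∈ S)
    (hdist : infDist (y + t • u) S = dist (y + t • u) q) (hu : ⟪y + t • u - q, u⟫ < 0) :
    ∀ᶠ τ in 𝓝[>] t, infDist (y + τ • u) S ≤ infDist (y + t • u) S := by
  have hshift : Tendsto (fun τ => τ - t) (𝓝[>] t) (𝓝[>] 0) :=
    tendsto_nhdsWithin_of_tendsto_nhds_of_eventually_within _
      (tendsto_nhdsWithin_of_tendsto_nhds ((continuous_sub_right t).tendsto' t 0 (sub_self t)))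
      (eventually_nhdsWithin_of_forall fun τ (hτ : t < τ) => sub_pos.2 hτ)
  filter_upwards [hshift.eventually (eventually_norm_add_smul_lt_of_inner_neg hu)] with τ hτ
  calc infDist (y + τ • u) S ≤ dist (y + τ • u) q := infDist_le_dist_of_mem hq
    _ = ‖y + t • u - q + (τ - t) • u‖ := by rw [dist_eq_norm, sub_smul]; congr 1; abel
    _ ≤ infDist (y + t • u) S := by rw [hdist, dist_eq_norm]; exact hτ.le

theorem add_smul_mem_of_forall_inner_neg [ProperSpace E] {S : Set E} (hS : IsClosed S)
    {y u : E} {s : ℝ} (hy : y ∈ S) (hs : 0 ≤ s)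
    (hinward : ∀ t ∈ Ico 0 s, ∀ q ∈ S, 0 < infDist (y + t • u) S →
      infDist (y + t • u) S = dist (y + t • u) q → ⟪y + t • u - q, u⟫ < 0) :
    y + s • u ∈ S := by
  have hcont : Continuous fun t : ℝ => infDist (y + t • u) S := by fun_prop
  have hzero : infDist (y + (0 : ℝ) • u) S ≤ 0 := by simp [infDist_zero_of_mem hy]
  refine (hS.mem_iff_infDist_zero ⟨y, hy⟩).2 (le_antisymm ?_ infDist_nonneg)
  refine nonpos_of_eventually_le_of_pos hcont.continuousOn hzero (fun t ht hpos => ?_) s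
    ⟨hs, le_rfl⟩
  obtain ⟨q, hq, hdist⟩ := hS.exists_infDist_eq_dist ⟨y, hy⟩ (y + t • u)
  exact eventually_infDist_add_smul_le hq hdist (hinward t ht q hq hpos hdist)

end InnerProductSpace

section Clarke

variable {d : ℕ} {S : Set (Euc d)} {x : Euc d}

theorem limProxDirs_subset_sphere : limProxDirs S x ⊆ sphere 0 1 :=
  fun _ hξ => mem_sphere_zero_iff_norm.2 hξ.1

theorem zero_mem_clarkeNormalCone : (0 : Euc d) ∈ clarkeNormalCone S x :=
  ⟨0, le_rfl, 0, subset_closure (subset_convexHull ℝ _ (Or.inl rfl)), (zero_smul ℝ _).symm⟩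

theorem coe_hull_subset_clarkeNormalCone :
    (ConvexCone.hull ℝ (closure (convexHull ℝ ({0} ∪ limProxDirs S x))) : Set (Euc d)) ⊆
      clarkeNormalCone S x := by
  intro p hp
  obtain ⟨r, hr, ξ, hξ, rfl⟩ :=
    (ConvexCone.mem_hull_of_convex (convex_convexHull ℝ _).closure).1 hp
  exact ⟨r, hr.le, ξ, hξ, rfl⟩

theorem WedgedAt.salient (hW : WedgedAt S x) :
    (ConvexCone.hull ℝ (closure (convexHull ℝ ({0} ∪ limProxDirs S x)))).Salient := by
  intro p hp hp0 hnp
  have hpN : p ∈ clarkeNormalCone S x ∩ -clarkeNormalCone S x :=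
    ⟨coe_hull_subset_clarkeNormalCone hp, mem_neg.2 (coe_hull_subset_clarkeNormalCone hnp)⟩
  rw [hW] at hpN
  exact hp0 hpN

theorem WedgedAt.zero_notMem_convexHull_closure_limProxDirs (hW : WedgedAt S x) :
    (0 : Euc d) ∉ convexHull ℝ (closure (limProxDirs S x)) := by
  have hsub : closure (limProxDirs S x) ⊆
      (ConvexCone.hull ℝ (closure (convexHull ℝ ({0} ∪ limProxDirs S x))) : Set (Euc d)) \
        {0} := by
    intro ξ hξ
    refine ⟨ConvexCone.subset_hull
      (closure_mono ((subset_union_right).trans (subset_convexHull ℝ _)) hξ), fun h0 => ?_⟩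
    have hsphere := closure_minimal limProxDirs_subset_sphere isClosed_sphere hξ
    rw [mem_singleton_iff.1 h0, mem_sphere_zero_iff_norm, norm_zero] at hsphere
    exact zero_ne_one hsphere
  exact fun h0 => (convexHull_min hsub hW.salient.convex_diff_zero h0).2 rfl

theorem WedgedAt.exists_forall_limProxDirs_inner_lt (hW : WedgedAt S x) :
    ∃ v : Euc d, ∃ δ > 0, ∀ ξ ∈ limProxDirs S x, ⟪ξ, v⟫ < -δ := by
  have hK : IsCompact (closure (limProxDirs S x)) :=
    (isCompact_sphere 0 1).of_isClosed_subset isClosed_closure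
      (closure_minimal limProxDirs_subset_sphere isClosed_sphere)
  obtain ⟨v, δ, hδ, hv⟩ := exists_forall_inner_lt_neg_of_zero_notMem (convex_convexHull ℝ _)
    hK.isCompact_convexHull.isClosed hW.zero_notMem_convexHull_closure_limProxDirs
  exact ⟨v, δ, hδ, fun ξ hξ => hv ξ (subset_convexHull ℝ _ (subset_closure hξ))⟩

theorem exists_tendsto_limProxDirs_of_proximal {q w : ℕ → Euc d} (hq : ∀ n, q n ∈ S)
    (hqx : Tendsto q atTop (𝓝 x)) (hw0 : ∀ n, w n ≠ 0) (hw : Tendsto w atTop (𝓝 0))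
    (hprox : ∀ n, infDist (q n + w n) S = ‖w n‖) :
    ∃ ξ ∈ limProxDirs S x, ∃ φ : ℕ → ℕ, StrictMono φ ∧
      Tendsto (fun n => ‖w (φ n)‖⁻¹ • w (φ n)) atTop (𝓝 ξ) := by
  have hunit : ∀ n, ‖w n‖⁻¹ • w n ∈ sphere (0 : Euc d) 1 := fun n => by
    rw [mem_sphere_zero_iff_norm, norm_smul, norm_inv, norm_norm,
      inv_mul_cancel₀ (norm_ne_zero_iff.2 (hw0 n))]
  obtain ⟨ξ, hξ, φ, hφ, hlim⟩ := (isCompact_sphere (0 : Euc d) 1).tendsto_subseq hunit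
  refine ⟨ξ, ⟨mem_sphere_zero_iff_norm.1 hξ, q ∘ φ, w ∘ φ, fun n => hq _,
    hqx.comp hφ.tendsto_atTop, fun n => hw0 _, hw.comp hφ.tendsto_atTop, fun n => hprox _,
    hlim⟩, φ, hφ, hlim⟩

theorem exists_forall_proximal_inner_le {v : Euc d} {δ : ℝ}
    (hv : ∀ ξ ∈ limProxDirs S x, ⟪ξ, v⟫ < -δ) :
    ∃ r > 0, ∀ q ∈ S, dist q x < r → ∀ w : Euc d, w ≠ 0 → ‖w‖ < r →
      infDist (q + w) S = ‖w‖ → ⟪w, v⟫ ≤ -δ * ‖w‖ := by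
  by_contra! hbad
  have hseq : ∀ n : ℕ, ∃ q ∈ S, dist q x < 1 / (n + 1) ∧ ∃ w : Euc d, w ≠ 0 ∧
      ‖w‖ < 1 / (n + 1) ∧ infDist (q + w) S = ‖w‖ ∧ -δ * ‖w‖ < ⟪w, v⟫ :=
    fun n => hbad _ (by positivity)
  choose q hq hqx w hw0 hw hprox hinner using hseq
  have hr : Tendsto (fun n : ℕ => 1 / ((n : ℝ) + 1)) atTop (𝓝 0) :=
    tendsto_one_div_add_atTop_nhds_zero_nat
  obtain ⟨ξ, hξ, φ, hφ, hlim⟩ := exists_tendsto_limProxDirs_of_proximal hq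
    (tendsto_iff_dist_tendsto_zero.2 (squeeze_zero (fun _ => dist_nonneg) (fun n => (hqx n).le) hr))
    hw0 (tendsto_zero_iff_norm_tendsto_zero.2 (squeeze_zero (fun _ => norm_nonneg _)
      (fun n => (hw n).le) hr)) hprox
  have hdir : ∀ n, -δ ≤ ⟪‖w (φ n)‖⁻¹ • w (φ n), v⟫ := fun n => by
    have hpos : 0 < ‖w (φ n)‖ := norm_pos_iff.2 (hw0 _)
    rw [real_inner_smul_left, le_inv_mul_iff₀ hpos, mul_comm]
    exact (hinner _).le
  exact (hv ξ hξ).not_ge (ge_of_tendsto' (hlim.inner tendsto_const_nhds) hdir)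

theorem exists_wedge_of_forall_proximal_inner_le (hS : IsClosed S) {v : Euc d} {δ r : ℝ}
    (hδ : 0 < δ) (hr : 0 < r)
    (hprox : ∀ q ∈ S, dist q x < r → ∀ w : Euc d, w ≠ 0 → ‖w‖ < r →
      infDist (q + w) S = ‖w‖ → ⟪w, v⟫ ≤ -δ * ‖w‖) :
    ∃ ε > 0, ∀ y ∈ ball x ε ∩ S, ∀ z ∈ wedge v ε, y + z ∈ S := by
  -- `ε ≤ δ` makes `u` obtuse to the proximal normals, and `ε (2‖v‖ + 3) ≤ r` keeps the
  -- nearest points and proximal normals met along the segment within the range of `hprox`.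
  set ε := min (min 1 δ) (r / (2 * ‖v‖ + 3))
  have hK : 0 < 2 * ‖v‖ + 3 := by positivity
  have hε : 0 < ε := lt_min (lt_min one_pos hδ) (div_pos hr hK)
  have hε1 : ε ≤ 1 := (min_le_left _ _).trans (min_le_left _ _)
  have hεδ : ε ≤ δ := (min_le_left _ _).trans (min_le_right _ _)
  have hεr : ε * (2 * ‖v‖ + 3) ≤ r := (le_div_iff₀ hK).1 (min_le_right _ _)
  refine ⟨ε, hε, ?_⟩
  rintro y ⟨hyx, hy⟩ _ ⟨u, hu, s, ⟨hs0, hsε⟩, rfl⟩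
  rw [mem_ball, dist_eq_norm] at hyx hu
  have hu_le : ‖u‖ ≤ ‖v‖ + 1 := by linarith [norm_le_norm_sub_add u v]
  refine add_smul_mem_of_forall_inner_neg hS hy hs0 fun t ht q hq hpos hdist => ?_
  set w := y + t • u - q
  have hw : ‖w‖ = infDist (y + t • u) S := by rw [hdist, dist_eq_norm]
  have htu : ‖t • u‖ ≤ ε * (‖v‖ + 1) := by
    rw [norm_smul, Real.norm_of_nonneg ht.1]
    exact mul_le_mul (ht.2.le.trans hsε) hu_le (norm_nonneg u) hε.le
  have hw_le : ‖w‖ ≤ ‖t • u‖ := by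
    rw [hw]
    simpa [dist_eq_norm] using infDist_le_dist_of_mem (x := y + t • u) hy
  have hqx : dist q x < r := by
    rw [dist_eq_norm, show q - x = (y - x) + t • u - w by simp only [w]; abel]
    calc ‖(y - x) + t • u - w‖ ≤ ‖y - x‖ + ‖t • u‖ + ‖w‖ :=
          norm_sub_le_of_le (norm_add_le _ _) le_rfl
      _ < ε * (2 * ‖v‖ + 3) := by linarith
      _ ≤ r := hεr
  have hw_pos : 0 < ‖w‖ := hw ▸ hpos
  have hwv := hprox q hq hqx w (norm_pos_iff.1 hw_pos) (by nlinarith)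
    (by rw [show q + w = y + t • u by simp only [w]; abel, hw])
  calc ⟪w, u⟫ = ⟪w, v⟫ + ⟪w, u - v⟫ := by rw [← inner_add_right, add_sub_cancel]
    _ ≤ -δ * ‖w‖ + ‖w‖ * ‖u - v‖ := add_le_add hwv (real_inner_le_norm _ _)
    _ < 0 := by nlinarith

theorem WedgedAt.exists_wedge (hS : IsClosed S) (hW : WedgedAt S x) :
    ∃ v : Euc d, ∃ ε > 0, ∀ y ∈ ball x ε ∩ S, ∀ z ∈ wedge v ε, y + z ∈ S := by
  obtain ⟨v, δ, hδ, hv⟩ := hW.exists_forall_limProxDirs_inner_lt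
  obtain ⟨r, hr, hprox⟩ := exists_forall_proximal_inner_le hv
  exact ⟨v, exists_wedge_of_forall_proximal_inner_le hS hδ hr hprox⟩

theorem inner_limProxDirs_nonpos_of_wedge {v : Euc d} {ε : ℝ} (hε : 0 < ε)
    (hwedge : ∀ y ∈ ball x ε ∩ S, ∀ z ∈ wedge v ε, y + z ∈ S) {ξ u : Euc d}
    (hξ : ξ ∈ limProxDirs S x) (hu : u ∈ ball v ε) : ⟪ξ, u⟫ ≤ 0 := by
  obtain ⟨-, y, w, hy, hyx, -, -, hprox, hdir⟩ := hξ
  have hterm : ∀ᶠ n in atTop, ⟪‖w n‖⁻¹ • w n, u⟫ ≤ 0 := by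
    filter_upwards [hyx (ball_mem_nhds x hε)] with n hn
    rw [real_inner_smul_left]
    refine mul_nonpos_of_nonneg_of_nonpos (by positivity)
      (inner_nonpos_of_eventually_norm_le_norm_sub_smul ?_)
    filter_upwards [Ioc_mem_nhdsGT hε] with s hs
    calc ‖w n‖ = infDist (y n + w n) S := (hprox n).symm
      _ ≤ dist (y n + w n) (y n + s • u) := infDist_le_dist_of_mem
          (hwedge _ ⟨hn, hy n⟩ _ ⟨u, hu, s, Ioc_subset_Icc_self hs, rfl⟩)
      _ = ‖w n - s • u‖ := by rw [dist_eq_norm, add_sub_add_left_eq_sub]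
  exact le_of_tendsto (hdir.inner tendsto_const_nhds) hterm

theorem mem_clarkeTangentCone_of_forall_limProxDirs {u : Euc d}
    (h : ∀ ξ ∈ limProxDirs S x, ⟪ξ, u⟫ ≤ 0) : u ∈ clarkeTangentCone S x := by
  rintro _ ⟨lam, hlam, ξ, hξ, rfl⟩
  have hhalf : closure (convexHull ℝ ({0} ∪ limProxDirs S x)) ⊆ {p | ⟪p, u⟫ ≤ 0} :=
    closure_minimal
      (convexHull_min (union_subset (by simp) h)
        (convex_halfSpace_le
          ⟨fun p q => inner_add_left p q u, fun c p => real_inner_smul_left p u c⟩ 0))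
      (isClosed_le (by fun_prop) continuous_const)
  exact (real_inner_smul_left ξ u lam).trans_le (mul_nonpos_of_nonneg_of_nonpos hlam (hhalf hξ))

theorem interior_clarkeTangentCone_nonempty_of_wedge {v : Euc d} {ε : ℝ} (hε : 0 < ε)
    (hwedge : ∀ y ∈ ball x ε ∩ S, ∀ z ∈ wedge v ε, y + z ∈ S) :
    (interior (clarkeTangentCone S x)).Nonempty :=
  ⟨v, mem_interior.2 ⟨ball v ε, fun _ hu => mem_clarkeTangentCone_of_forall_limProxDirs
    fun _ hξ => inner_limProxDirs_nonpos_of_wedge hε hwedge hξ hu,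
    isOpen_ball, mem_ball_self hε⟩⟩

theorem wedgedAt_of_interior_clarkeTangentCone_nonempty
    (h : (interior (clarkeTangentCone S x)).Nonempty) : WedgedAt S x := by
  refine eq_singleton_iff_unique_mem.2
    ⟨⟨zero_mem_clarkeNormalCone, by simpa using zero_mem_clarkeNormalCone⟩, ?_⟩
  rintro p ⟨hp, hnp⟩
  have hker : clarkeTangentCone S x ⊆ LinearMap.ker (innerₛₗ ℝ p) := fun u hu =>
    le_antisymm (hu p hp) (by simpa [rinner, inner_neg_left] using hu (-p) hnp)
  have htop := (LinearMap.ker (innerₛₗ ℝ p)).eq_top_of_nonempty_interior'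
    (h.mono (interior_mono hker))
  have hpker : p ∈ LinearMap.ker (innerₛₗ ℝ p) := htop ▸ Submodule.mem_top
  simpa using hpker

end Clarke

theorem wedged_characterization_general {d : ℕ} (S : Set (Euc d)) (hS : IsClosed S) (x : Euc d) :
    (WedgedAt S x ↔ (interior (clarkeTangentCone S x)).Nonempty) ∧
    (WedgedAt S x ↔
      ∃ v : Euc d, ∃ ε : ℝ, 0 < ε ∧
        ∀ y ∈ ball x ε ∩ S, ∀ z ∈ wedge v ε, y + z ∈ S) := by
  refine ⟨⟨fun hW => ?_, wedgedAt_of_interior_clarkeTangentCone_nonempty⟩,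
    ⟨fun hW => hW.exists_wedge hS, fun ⟨v, ε, hε, hwedge⟩ => ?_⟩⟩
  · obtain ⟨v, ε, hε, hwedge⟩ := hW.exists_wedge hS
    exact interior_clarkeTangentCone_nonempty_of_wedge hε hwedge
  · exact wedgedAt_of_interior_clarkeTangentCone_nonempty
      (interior_clarkeTangentCone_nonempty_of_wedge hε hwedge)

/-- **Proposition 2.5 (characterization of wedged sets).** For a closed nonempty `S` and a
boundary point `x`, the following are equivalent: (i) `S` is wedged at `x`; (ii) the Clarke
tangent cone at `x` has nonempty interior; (iii) a wedge condition holds near `x`. -/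
theorem wedged_characterization {d : ℕ} (S : Set (Euc d)) (hS : IsClosed S)
    (hne : S.Nonempty) (x : Euc d) (hx : x ∈ frontier S) :
    (WedgedAt S x ↔ (interior (clarkeTangentCone S x)).Nonempty) ∧
    (WedgedAt S x ↔
      ∃ v : Euc d, ∃ ε : ℝ, 0 < ε ∧
        ∀ y ∈ ball x ε ∩ S, ∀ z ∈ wedge v ε, y + z ∈ S) :=
  wedged_characterization_general S hS x
end
end

section
/- Let Z ⊆ ℝ^d be a closed set which is wedged at a point x ∈ ∂Z. Assume v ∈ ℝ^d and ε > 0 are such that: y + W(v,ε) ⊆ Z for all y ∈ (x + εB_d) ∩ Z, and y + W(−v,ε) ⊆ closure(ℝ^d ∖ Z) for all y ∈ (x + εB_d) ∖ interior(Z). Then there exists a neighborhood N_x of x such that for all y ∈ N_x ∖ ∂Z at which the signed distance function Δ_Z is differentiable, the directional derivative of Δ_Z at y in the direction v satisfies ∇Δ_Z(y)·v ≤ −ε. -/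
open Set Metric Filter Topology MeasureTheory
open scoped Pointwise

noncomputable section

/-!
Off `Z`, let `z` be a nearest point of `Z` to `y`. The wedge condition at `z` puts the whole ball
of radius `ε t` about `z + t v` inside `Z`, so `dist(y + t v, Z) ≤ dist(y, Z) - ε t`. Inside `Z`,
the same argument for the closed set `closure Zᶜ` and the wedge `W(-v, ε)`, applied at `y + t v`
and a nearest point of it in `closure Zᶜ`, gives `dist(y, Zᶜ) ≤ dist(y + t v, Zᶜ) - ε t`. Either way
`Δ_Z(y + t v) ≤ Δ_Z(y) - ε t` for small `t > 0`, which bounds the directional derivative.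
-/

section NormedSpace

variable {E : Type*} [NormedAddCommGroup E] [NormedSpace ℝ E]

theorem infDist_le_max_sub_of_closedBall_subset {s : Set E} {c q : E} {r : ℝ} (hr : 0 ≤ r)
    (hs : closedBall c r ⊆ s) : infDist q s ≤ max (dist q c - r) 0 := by
  rcases le_or_gt (dist q c) r with hqc | hrq
  · rw [infDist_zero_of_mem (hs (mem_closedBall.mpr hqc))]
    exact le_max_right _ _
  · have hD : 0 < dist q c := hr.trans_lt hrq
    set p := AffineMap.lineMap c q (r / dist q c)
    have hp : dist p c = r := by
      rw [dist_lineMap_left, dist_comm c, Real.norm_of_nonneg (by positivity),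
        div_mul_cancel₀ _ hD.ne']
    have hqp : dist p q = dist q c - r := by
      rw [dist_lineMap_right, dist_comm c, Real.norm_of_nonneg (by
        rw [sub_nonneg, div_le_one hD]; exact hrq.le), sub_mul, one_mul,
        div_mul_cancel₀ _ hD.ne']
    calc infDist q s ≤ dist q p := infDist_le_dist_of_mem (hs (mem_closedBall.mpr hp.le))
      _ = dist q c - r := by rw [dist_comm, hqp]
      _ ≤ _ := le_max_left _ _

theorem fderiv_apply_le_of_eventually_le {f : E → ℝ} {y v : E} {c : ℝ}
    (hf : DifferentiableAt ℝ f y) (hdec : ∀ᶠ t in 𝓝[>] (0 : ℝ), f (y + t • v) ≤ f y - c * t) :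
    fderiv ℝ f y v ≤ -c := by
  have hline : HasDerivAt (fun t : ℝ => y + t • v) v 0 := by
    simpa using ((hasDerivAt_id (0 : ℝ)).smul_const v).const_add y
  have hder : HasDerivAt (fun t : ℝ => f (y + t • v)) (fderiv ℝ f y v) 0 :=
    (by simpa using hf.hasFDerivAt : HasFDerivAt f (fderiv ℝ f y) (y + (0 : ℝ) • v))
      |>.comp_hasDerivAt 0 hline
  refine le_of_tendsto ((hasDerivAt_iff_tendsto_slope.mp hder).mono_left
    (nhdsWithin_mono 0 fun t (ht : t ∈ Ioi (0 : ℝ)) => ne_of_gt ht)) ?_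
  filter_upwards [hdec, self_mem_nhdsWithin] with t ht (ht0 : 0 < t)
  rw [slope_def_field, zero_smul, add_zero, sub_zero, div_le_iff₀ ht0]
  linarith

end NormedSpace

theorem IsClosed.exists_infDist_eq_dist_and_dist_le {α : Type*} [MetricSpace α] [ProperSpace α]
    {s : Set α} (hs : IsClosed s) {x : α} (hx : x ∈ s) (q : α) :
    ∃ z ∈ s, infDist q s = dist q z ∧ dist z x ≤ 2 * dist q x := by
  obtain ⟨z, hz, hqz⟩ := hs.exists_infDist_eq_dist ⟨x, hx⟩ q
  refine ⟨z, hz, hqz, ?_⟩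
  calc dist z x ≤ dist q z + dist q x := dist_triangle_left z x q
    _ ≤ 2 * dist q x := by linarith [hqz ▸ infDist_le_dist_of_mem (x := q) hx]

theorem closedBall_subset_of_add_wedge_subset {d : ℕ} {C : Set (Euc d)} (hC : IsClosed C)
    {y v : Euc d} {ε t : ℝ} (hε : 0 < ε) (ht : 0 < t) (htε : t ≤ ε)
    (hwedge : ∀ z ∈ wedge v ε, y + z ∈ C) : closedBall (y + t • v) (ε * t) ⊆ C := by
  intro q hq
  set w := t⁻¹ • (q - y)
  have hwv : w ∈ closure (ball v ε) := by
    rw [closure_ball v hε.ne', mem_closedBall, dist_eq_norm,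
      show w - v = t⁻¹ • (q - (y + t • v)) by
        simp only [w, smul_sub, smul_add, smul_smul, inv_mul_cancel₀ ht.ne', one_smul]; abel,
      norm_smul, Real.norm_of_nonneg (inv_nonneg.mpr ht.le), ← dist_eq_norm, inv_mul_le_iff₀ ht,
      mul_comm]
    exact mem_closedBall.mp hq
  have hq : q = y + t • w := by simp only [w, smul_smul, mul_inv_cancel₀ ht.ne', one_smul]; abel
  rw [hq, ← hC.closure_eq]
  exact map_mem_closure (f := fun w => y + t • w) (by fun_prop) hwv
    fun w' hw' => hwedge (t • w') ⟨w', hw', t, ⟨ht.le, htε⟩, rfl⟩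

theorem signedDistFn_add_smul_le_of_notMem {d : ℕ} {Z : Set (Euc d)} (hZ : IsClosed Z)
    {x v : Euc d} {ε t : ℝ} (hx : x ∈ Z) (hε : 0 < ε)
    (hwedge : ∀ y ∈ ball x ε ∩ Z, ∀ z ∈ wedge v ε, y + z ∈ Z)
    {y : Euc d} (hy : y ∈ ball x (ε / 2)) (hyZ : y ∉ Z)
    (ht : 0 < t) (htε : t ≤ ε) (hεt : ε * t ≤ infDist y Z) :
    signedDistFn Z (y + t • v) ≤ signedDistFn Z y - ε * t := by
  obtain ⟨z, hz, hyz, hzx⟩ := hZ.exists_infDist_eq_dist_and_dist_le hx y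
  have hball : closedBall (z + t • v) (ε * t) ⊆ Z :=
    closedBall_subset_of_add_wedge_subset hZ hε ht htε
      (hwedge z ⟨by rw [mem_ball] at hy ⊢; linarith, hz⟩)
  have hdist : infDist (y + t • v) Z ≤ infDist y Z - ε * t := by
    have := infDist_le_max_sub_of_closedBall_subset (q := y + t • v) (by positivity) hball
    rwa [dist_add_right, ← hyz, max_eq_left (by linarith)] at this
  have hyC : infDist y (closure Zᶜ) = 0 := infDist_zero_of_mem (subset_closure hyZ)
  unfold signedDistFn
  linarith [infDist_nonneg (x := y + t • v) (s := closure Zᶜ)]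

theorem signedDistFn_add_smul_le_of_mem_interior {d : ℕ} {Z : Set (Euc d)} (hZ : IsClosed Z)
    {x v : Euc d} {ε t : ℝ} (hx : x ∈ closure Zᶜ) (hε : 0 < ε)
    (hwedge : ∀ y ∈ ball x ε ∩ Z, ∀ z ∈ wedge v ε, y + z ∈ Z)
    (hwedge' : ∀ y ∈ ball x ε, y ∉ interior Z → ∀ z ∈ wedge (-v) ε, y + z ∈ closure Zᶜ)
    {y : Euc d} (hy : y ∈ ball x ε) (hyZ : y ∈ interior Z) (hyt : y + t • v ∈ ball x (ε / 2))
    (ht : 0 < t) (htε : t ≤ ε) :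
    signedDistFn Z (y + t • v) ≤ signedDistFn Z y - ε * t := by
  have hytZ : y + t • v ∈ Z :=
    closedBall_subset_of_add_wedge_subset hZ hε ht htε (hwedge y ⟨hy, interior_subset hyZ⟩)
      (mem_closedBall_self (by positivity))
  -- the argument of the previous lemma, for `closure Zᶜ`, run backwards from `y + t • v`
  obtain ⟨z, hz, hyz, hzx⟩ := isClosed_closure.exists_infDist_eq_dist_and_dist_le hx (y + t • v)
  have hball : closedBall (z + t • -v) (ε * t) ⊆ closure Zᶜ :=
    closedBall_subset_of_add_wedge_subset isClosed_closure hε ht htε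
      (hwedge' z (by rw [mem_ball] at hyt ⊢; linarith)
        (by rwa [closure_compl, mem_compl_iff] at hz))
  have hdist : infDist y (closure Zᶜ) ≤ infDist (y + t • v) (closure Zᶜ) - ε * t := by
    have hpos : 0 < infDist y (closure Zᶜ) := by
      rw [← isClosed_closure.notMem_iff_infDist_pos ⟨x, hx⟩, closure_compl]
      exact not_not.mpr hyZ
    have := infDist_le_max_sub_of_closedBall_subset (q := y) (by positivity) hball
    rw [smul_neg, ← sub_eq_add_neg, ← dist_add_right y _ (t • v), sub_add_cancel, ← hyz] at this
    exact (le_max_iff.mp this).resolve_right hpos.not_ge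
  unfold signedDistFn
  rw [infDist_zero_of_mem hytZ, infDist_zero_of_mem (interior_subset hyZ)]
  linarith

theorem signed_distance_decrease_general {d : ℕ} (Z : Set (Euc d)) (hZ : IsClosed Z)
    (x : Euc d) (hx : x ∈ frontier Z)
    (v : Euc d) (ε : ℝ) (hε : 0 < ε)
    (h1 : ∀ y ∈ ball x ε ∩ Z, ∀ z ∈ wedge v ε, y + z ∈ Z)
    (h2 : ∀ y ∈ ball x ε, y ∉ interior Z → ∀ z ∈ wedge (-v) ε, y + z ∈ closure Zᶜ) :
    ∃ Nx ∈ 𝓝 x, ∀ y ∈ Nx, y ∉ frontier Z →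
      DifferentiableAt ℝ (signedDistFn Z) y →
      (fderiv ℝ (signedDistFn Z) y) v ≤ -ε := by
  rw [frontier_eq_closure_inter_closure, hZ.closure_eq] at hx
  refine ⟨ball x (ε / 2), ball_mem_nhds x (by positivity), fun y hy hyf hdiff => ?_⟩
  refine fderiv_apply_le_of_eventually_le hdiff ?_
  have hline : Tendsto (fun t : ℝ => y + t • v) (𝓝[>] 0) (𝓝 y) :=
    tendsto_nhdsWithin_of_tendsto_nhds <| Continuous.tendsto' (by fun_prop) 0 y (by simp)
  have hsmall : ∀ᶠ t in 𝓝[>] (0 : ℝ), 0 < t ∧ t ≤ ε := Ioc_mem_nhdsGT hε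
  by_cases hyZ : y ∈ Z
  · have hyI : y ∈ interior Z := by
      by_contra hyI
      exact hyf (hZ.frontier_eq ▸ ⟨hyZ, hyI⟩)
    filter_upwards [hsmall, hline (isOpen_ball.mem_nhds hy)] with t ⟨ht, htε⟩ hyt
    exact signedDistFn_add_smul_le_of_mem_interior hZ hx.2 hε h1 h2
      (ball_subset_ball (by linarith) hy) hyI hyt ht htε
  · have hpos : 0 < infDist y Z := (hZ.notMem_iff_infDist_pos ⟨x, hx.1⟩).mp hyZ
    filter_upwards [hsmall, Ioo_mem_nhdsGT (div_pos hpos hε)] with t ⟨ht, htε⟩ htD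
    exact signedDistFn_add_smul_le_of_notMem hZ hx.1 hε h1 hy hyZ ht htε
      (by linarith [(lt_div_iff₀' hε).mp htD.2])

/-- **Lemma 2.7 (decrease of the signed distance, Lemma 3.7 in [CRS]).** If the closed set `Z`
is wedged at `x ∈ ∂Z` and the two wedge conditions of radius `ε` hold around `x` with axis `v`,
then near `x` the signed distance `Δ_Z` decreases at rate at least `ε` in the direction `v` at
every point of differentiability off `∂Z`. -/
theorem signed_distance_decrease {d : ℕ} (Z : Set (Euc d)) (hZ : IsClosed Z)
    (x : Euc d) (hx : x ∈ frontier Z) (hw : WedgedAt Z x)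
    (v : Euc d) (ε : ℝ) (hε : 0 < ε)
    (h1 : ∀ y ∈ ball x ε ∩ Z, ∀ z ∈ wedge v ε, y + z ∈ Z)
    (h2 : ∀ y ∈ ball x ε, y ∉ interior Z → ∀ z ∈ wedge (-v) ε, y + z ∈ closure Zᶜ) :
    ∃ Nx ∈ 𝓝 x, ∀ y ∈ Nx, y ∉ frontier Z →
      DifferentiableAt ℝ (signedDistFn Z) y →
      (fderiv ℝ (signedDistFn Z) y) v ≤ -ε :=
  signed_distance_decrease_general Z hZ x hx v ε hε h1 h2
end
end
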